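/- arXiv:2107.03132 — 3 statements merged into one kernel-verified Lean document; each statement's English description precedes it below -/
import Mathlib

section
/- Let G be a finite group with G/[G,G] cyclic and let χ ∈ Irr(G). Then the restriction of χ to [G,G] is irreducible if and only if χη ≠ χ for every nontrivial linear character η of G. -/
open scoped BigOperators

/-- `χ : G → ℂ` is an irreducible (complex) character of the group `G`:
it is the character of some simple finite-dimensional complex representation. -/
def IsIrrChar (G : Type) [Group G] (χ : G → ℂ) : Prop :=
  ∃ V : FDRep ℂ G, CategoryTheory.Simple V ∧ FDRep.character V = χ

/-- The number of irreducible constituents of the restriction of `χ` to the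
subgroup `N` of the finite group `G`, i.e. the number of irreducible characters
of `N` having nonzero inner product with the restriction of `χ`. -/
noncomputable def numConstituents (G : Type) [Group G] [Fintype G] (N : Subgroup G)
    (χ : G → ℂ) : ℕ :=
  letI : Fintype N := Fintype.ofFinite N
  {ψ : N → ℂ | IsIrrChar N ψ ∧ (∑ n : N, χ (n : G) * (starRingEnd ℂ) (ψ n)) ≠ 0}.ncard

/-!
Write `N = [G, G]` and `χ = χ_V`. Since `χη` is again irreducible, `⟨χη, χ⟩ = [χη = χ]`.
Summing these relations over all linear characters `η` and using
`∑_η η(g) = |G : N| · 1_N(g)` gives `#{η | χη = χ} = ⟨χ_N, χ_N⟩_N`. The trivial character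
always lies in the stabilizer, so the stabilizer is trivial iff `⟨χ_N, χ_N⟩_N = 1`, i.e. iff
`χ_N` is irreducible.
-/

open CategoryTheory Finset

lemma Finset.card_filter_eq_one_iff_of_mem {α : Type*} [Fintype α] {p : α → Prop}
    [DecidablePred p] {a : α} (ha : p a) : #{x | p x} = 1 ↔ ∀ x, x ≠ a → ¬ p x := by
  rw [card_eq_one]
  constructor
  · rintro ⟨b, hb⟩ x hxa hx
    have hmem : ∀ y, p y → y = b := fun y hy ↦ mem_singleton.1 (hb ▸ by simpa using hy)
    exact hxa ((hmem x hx).trans (hmem a ha).symm)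
  · intro h
    refine ⟨a, eq_singleton_iff_unique_mem.2 ⟨by simpa using ha, fun x hx ↦ ?_⟩⟩
    by_contra hxa
    exact h x hxa (by simpa using hx)

section LinearCharacters

variable {G : Type*} [Group G] [Finite G]

lemma forall_monoidHom_apply_eq_one_iff_mem_commutator {M : Type*} [CommMonoid M]
    [HasEnoughRootsOfUnity M (Monoid.exponent (Abelianization G))] {g : G} :
    (∀ η : G →* Mˣ, η g = 1) ↔ g ∈ commutator G := by
  rw [← Abelianization.ker_of, MonoidHom.mem_ker,
    ← CommGroup.forall_apply_eq_apply_iff (Abelianization G) (M := M)]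
  simp only [map_one]
  exact ⟨fun h φ ↦ by simpa using h (Abelianization.lift.symm φ),
    fun h η ↦ by simpa using h (Abelianization.lift η)⟩

variable (G) in
lemma natCard_monoidHom_units_eq_index (M : Type*) [CommMonoid M]
    [HasEnoughRootsOfUnity M (Monoid.exponent (Abelianization G))] :
    Nat.card (G →* Mˣ) = (commutator G).index :=
  (Nat.card_congr Abelianization.lift).trans
    (CommGroup.card_monoidHom_of_hasEnoughRootsOfUnity (Abelianization G) M)

lemma sum_monoidHom_units_apply {R : Type*} [CommRing R] [IsDomain R]
    [HasEnoughRootsOfUnity R (Monoid.exponent (Abelianization G))] [Fintype (G →* Rˣ)]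
    (g : G) [Decidable (g ∈ commutator G)] :
    ∑ η : G →* Rˣ, (η g : R) = if g ∈ commutator G then ((commutator G).index : R) else 0 := by
  classical
  have hev : (Units.coeHom R).comp (MonoidHom.eval g) = 1 ↔ g ∈ commutator G := by
    rw [← forall_monoidHom_apply_eq_one_iff_mem_commutator (M := R), DFunLike.ext_iff]
    simp only [MonoidHom.comp_apply, MonoidHom.eval_apply_apply, Units.coeHom_apply,
      MonoidHom.one_apply, Units.val_eq_one]
  have hsum := sum_hom_units ((Units.coeHom R).comp (MonoidHom.eval g))
  simp only [MonoidHom.comp_apply, MonoidHom.eval_apply_apply, Units.coeHom_apply] at hsum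
  rw [hsum, if_congr hev rfl rfl, ← natCard_monoidHom_units_eq_index G R,
    Nat.card_eq_fintype_card]
  split_ifs <;> simp

end LinearCharacters

namespace FDRep

universe u

variable {k G : Type u} [Field k] [Group G]

noncomputable def twist (V : FDRep k G) (η : G →* kˣ) : FDRep k G :=
  FDRep.of
    { toFun g := (η g : k) • V.ρ g
      map_one' := by simp
      map_mul' g h := by simp only [map_mul, Units.val_mul, smul_mul_smul_comm] }

lemma char_twist (V : FDRep k G) (η : G →* kˣ) (g : G) :
    (V.twist η).character g = V.character g * η g := by
  change LinearMap.trace k V ((η g : k) • V.ρ g) = _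
  rw [map_smul, smul_eq_mul, mul_comm]
  rfl

lemma char_twist_mul_char_twist_inv (V : FDRep k G) (η : G →* kˣ) (g : G) :
    (V.twist η).character g * (V.twist η).character g⁻¹ = V.character g * V.character g⁻¹ := by
  have hη : (η g : k) * η g⁻¹ = 1 := by rw [← Units.val_mul, ← map_mul, mul_inv_cancel]; simp
  rw [char_twist, char_twist]
  linear_combination V.character g * V.character g⁻¹ * hη

variable [Fintype G] [IsAlgClosed k] [CharZero k]

instance simple_twist (V : FDRep k G) [Simple V] (η : G →* kˣ) : Simple (V.twist η) := by
  rw [simple_iff_char_is_norm_one, ← (simple_iff_char_is_norm_one V).1 ‹_›]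
  simp only [char_twist_mul_char_twist_inv]

lemma nonempty_iso_iff_char_eq (V W : FDRep k G) [Simple V] [Simple W] :
    Nonempty (V ≅ W) ↔ V.character = W.character := by
  classical
  have : Invertible (Nat.card G : k) := invertibleOfNonzero (NeZero.ne _)
  refine ⟨fun ⟨i⟩ ↦ char_iso i, fun h ↦ by_contra fun hVW ↦ ?_⟩
  have hVW' := char_orthonormal V W
  rw [if_neg hVW, h, char_orthonormal W W, if_pos ⟨Iso.refl W⟩] at hVW'
  exact one_ne_zero hVW'

open scoped Classical in
lemma inner_char_twist_char (V : FDRep k G) [Simple V] (η : G →* kˣ) :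
    (Nat.card G : k)⁻¹ * ∑ g, V.character g * η g * V.character g⁻¹ =
      if (fun g ↦ V.character g * η g) = V.character then 1 else 0 := by
  have : Invertible (Nat.card G : k) := invertibleOfNonzero (NeZero.ne _)
  simp_rw [← char_twist, char_orthonormal, nonempty_iso_iff_char_eq]

open scoped Classical in
lemma card_twist_stabilizer_eq_inner_res
    [HasEnoughRootsOfUnity k (Monoid.exponent (Abelianization G))] [Fintype (G →* kˣ)]
    [Fintype (commutator G)] (V : FDRep k G) [Simple V] :
    (#{η : G →* kˣ | (fun g ↦ V.character g * η g) = V.character} : k) =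
      (Nat.card (commutator G) : k)⁻¹ *
        ∑ n : commutator G, V.character n * V.character (n : G)⁻¹ := by
  have hindex : ((commutator G).index : k) * Nat.card (commutator G) = Nat.card G := by
    exact_mod_cast (commutator G).index_mul_card
  have hindex0 : ((commutator G).index : k) ≠ 0 :=
    Nat.cast_ne_zero.2 Subgroup.index_ne_zero_of_finite
  have hN : (Nat.card (commutator G) : k) ≠ 0 := NeZero.ne _
  calc (#{η : G →* kˣ | (fun g ↦ V.character g * η g) = V.character} : k)
      = ∑ η : G →* kˣ, (Nat.card G : k)⁻¹ * ∑ g, V.character g * η g * V.character g⁻¹ := by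
        simp only [inner_char_twist_char, sum_boole]
    _ = (Nat.card G : k)⁻¹ *
          ∑ g, V.character g * V.character g⁻¹ * ∑ η : G →* kˣ, (η g : k) := by
        rw [← mul_sum, sum_comm]
        simp only [mul_sum, mul_right_comm]
    _ = (Nat.card G : k)⁻¹ * ((commutator G).index *
          ∑ n : commutator G, V.character n * V.character (n : G)⁻¹) := by
        simp only [sum_monoidHom_units_apply, mul_ite, mul_zero]
        rw [← sum_filter, sum_subtype _ (p := (· ∈ commutator G)) (by simp), ← sum_mul,
          mul_comm (_ : k) (Nat.cast _)]
    _ = _ := by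
        rw [← hindex]
        field_simp

end FDRep

lemma isIrrChar_character_iff {H : Type} [Group H] [Fintype H] (V : FDRep ℂ H) :
    IsIrrChar H V.character ↔ ∑ h, V.character h * V.character h⁻¹ = Nat.card H := by
  refine ⟨?_, fun h ↦ ⟨V, (FDRep.simple_iff_char_is_norm_one V).2 h, rfl⟩⟩
  rintro ⟨U, hU, hUV⟩
  rw [← hUV]
  exact (FDRep.simple_iff_char_is_norm_one U).1 hU

theorem res_irreducible_iff_stabilizer_trivial_general
    (G : Type) [Group G] [Fintype G]
    (χ : G → ℂ) (hχ : IsIrrChar G χ) :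
    IsIrrChar (commutator G) (fun n : commutator G => χ (n : G)) ↔
      ∀ η : G →* ℂˣ, η ≠ 1 → (fun g => χ g * (η g : ℂ)) ≠ χ := by
  classical
  obtain ⟨V, hV, rfl⟩ := hχ
  let := Fintype.ofFinite (G →* ℂˣ)
  let W : FDRep ℂ (commutator G) := (Action.res _ (commutator G).subtype).obj V
  have hW : W.character = fun n : commutator G ↦ V.character n := rfl
  have hN : (Nat.card (commutator G) : ℂ) ≠ 0 := NeZero.ne _
  rw [← hW, isIrrChar_character_iff, ← Finset.card_filter_eq_one_iff_of_mem (a := 1) (by simp),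
    ← Nat.cast_inj (R := ℂ), FDRep.card_twist_stabilizer_eq_inner_res, Nat.cast_one,
    inv_mul_eq_one₀ hN, eq_comm]
  rfl

/-- If `G/[G,G]` is cyclic and `χ ∈ Irr(G)`, then the restriction of `χ` to
`[G,G]` is irreducible iff `χη ≠ χ` for every nontrivial linear character `η` of `G`. -/
theorem res_irreducible_iff_stabilizer_trivial
    (G : Type) [Group G] [Fintype G] (hcyc : IsCyclic (Abelianization G))
    (χ : G → ℂ) (hχ : IsIrrChar G χ) :
    IsIrrChar (commutator G) (fun n : commutator G => χ (n : G)) ↔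
      ∀ η : G →* ℂˣ, η ≠ 1 → (fun g => χ g * (η g : ℂ)) ≠ χ :=
  res_irreducible_iff_stabilizer_trivial_general G χ hχ
end

section
/- For ε = ±1 and k ≥ 1, the generating function of the numbers c_{n,k}(q) satisfies the formal power series identity Σ_{n≥0} c_{n,k}(q) tⁿ = ∏_{r=1}^{∞} (1 − ε t^{kr})/(1 − q t^{kr}). -/
open scoped BigOperators Classical

/-- The partition sum `c_{n,k}(q)` (for `ε = ±1`): the sum over partitions
`ν = (1^{n₁} 2^{n₂} ⋯)` of `n` with all multiplicities `nᵢ` divisible by `k` of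
`∏_{nᵢ>0} (q^{nᵢ/k} - ε q^{nᵢ/k - 1})`. -/
noncomputable def cnk (n k : ℕ) (ε q : ℤ) : ℤ :=
  ∑ ν : Nat.Partition n,
    if ∀ i, k ∣ Multiset.count i ν.parts then
      ∏ i ∈ Finset.range (n + 1),
        if 0 < Multiset.count i ν.parts then
          q ^ (Multiset.count i ν.parts / k) - ε * q ^ (Multiset.count i ν.parts / k - 1)
        else 1
    else 0

/-!
For `k ∣ c`, the factor `q^{c/k} - ε q^{c/k-1}` (or `1` when `c = 0`) attached to a part of
multiplicity `c` in `c_{n,k}(q)` is the `c`-th coefficient of `W(t^k)`, where `W` expands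
`(1 - εt)/(1 - qt)`; multiplicities not divisible by `k` get the coefficient `0`. So
`Σ c_{n,k}(q) tⁿ` is the partition generating function `Nat.Partition.genFun` whose Euler
factor for parts of size `r` is `W(t^{kr}) = (1 - εt^{kr})/(1 - qt^{kr})`. Factors with
`r > N` are `1 + O(t^{N+1})`, so truncating the Euler product at `r = N` leaves the
coefficients up to `t^N` unchanged.
-/

open PowerSeries Finset
open scoped PowerSeries.WithPiTopology

section CommRing

variable {R : Type*} [CommRing R]

theorem dvd_prod_sub_one {ι : Type*} {a : R} {s : Finset ι} {f : ι → R}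
    (h : ∀ i ∈ s, a ∣ f i - 1) : a ∣ ∏ i ∈ s, f i - 1 :=
  prod_induction f (fun x ↦ a ∣ x - 1)
    (fun x y hx hy ↦ by
      rw [show x * y - 1 = x * (y - 1) + (x - 1) by ring]
      exact dvd_add (hy.mul_left x) hx)
    (by simp) h

namespace PowerSeries

/-- The expansion of `(1 - εt)/(1 - qt)`. -/
noncomputable def weightSeries (ε q : R) : R⟦X⟧ :=
  mk fun m ↦ if m = 0 then 1 else q ^ m - ε * q ^ (m - 1)

theorem weightSeries_mul_one_sub (ε q : R) :
    weightSeries ε q * (1 - C q * X) = 1 - C ε * X := by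
  ext (_ | _ | m) <;>
    simp [weightSeries, mul_sub, ← mul_assoc, mul_comm _ (C q), coeff_succ_mul_X, pow_succ]
  ring

theorem expand_weightSeries_mul_one_sub (ε q : R) (p : ℕ) (hp : p ≠ 0) :
    expand p hp (weightSeries ε q) * (1 - C q * X ^ p) = 1 - C ε * X ^ p := by
  simpa [expand_C] using congrArg (expand p hp) (weightSeries_mul_one_sub ε q)

theorem X_pow_dvd_expand_sub_one {φ : R⟦X⟧} (hφ : constantCoeff φ = 1) (p : ℕ) (hp : p ≠ 0) :
    X ^ p ∣ expand p hp φ - 1 := by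
  have : X ∣ φ - 1 := X_dvd_iff.mpr (by simp [hφ])
  simpa using map_dvd (expand p hp) this

theorem coeff_expand_weightSeries (ε q : R) {k : ℕ} (hk : k ≠ 0) (c : ℕ) :
    coeff c (expand k hk (weightSeries ε q)) =
      if k ∣ c then (if 0 < c then q ^ (c / k) - ε * q ^ (c / k - 1) else 1) else 0 := by
  rw [coeff_expand]
  split_ifs with hkc hc
  · obtain ⟨m, rfl⟩ := hkc
    simp_all [weightSeries, Nat.pos_iff_ne_zero]
  · simp_all [weightSeries]
  · rfl

variable [TopologicalSpace R]

theorem one_add_tsum_eq_expand [T2Space R] {φ : R⟦X⟧} (hφ : constantCoeff φ = 1) {p : ℕ}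
    (hp : p ≠ 0) : 1 + ∑' j, coeff (j + 1) φ • X ^ (p * (j + 1)) = expand p hp φ := by
  suffices HasSum (fun j ↦ coeff (j + 1) φ • (X : R⟦X⟧) ^ (p * (j + 1))) (expand p hp (φ - 1)) by
    rw [this.tsum_eq, map_sub, map_one, add_sub_cancel]
  have hinj : Function.Injective fun j ↦ p * (j + 1) := fun a b h ↦ by simpa [hp] using h
  convert (hinj.hasSum_iff fun d hd ↦ ?_).mpr
    (hasSum_of_monomials_self (expand p hp (φ - 1))) using 1
  · ext j : 1
    simp [coeff_expand_mul, X_pow_eq, hp, ← map_smul]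
  · rw [coeff_expand]
    split_ifs with hpd
    · obtain ⟨_ | j, rfl⟩ := hpd
      · simp [hφ]
      · exact absurd ⟨j, rfl⟩ hd
    · simp

theorem X_pow_dvd_sub_prod_range_of_hasProd [T2Space R] {F : ℕ → R⟦X⟧} {P : R⟦X⟧}
    (hP : HasProd F P) (hF : ∀ i, X ^ (i + 1) ∣ F i - 1) (N : ℕ) :
    X ^ (N + 1) ∣ P - ∏ i ∈ range N, F i := by
  have htail : ∀ s ⊇ range N, X ^ (N + 1) ∣ ∏ i ∈ s, F i - ∏ i ∈ range N, F i := by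
    intro s hs
    rw [← prod_sdiff hs, ← sub_one_mul]
    refine Dvd.dvd.mul_right (dvd_prod_sub_one fun i hi ↦ ?_) _
    have hi : N ≤ i := by simpa using (mem_sdiff.mp hi).2
    exact (pow_dvd_pow X (by omega)).trans (hF i)
  rw [X_pow_dvd_iff]
  intro n hn
  rw [map_sub, sub_eq_zero]
  have hlim := ((WithPiTopology.continuous_coeff R n).tendsto P).comp hP
  refine tendsto_nhds_unique hlim (tendsto_const_nhds.congr' ?_)
  filter_upwards [Filter.eventually_ge_atTop (range N)] with s hs
  have := X_pow_dvd_iff.mp (htail s hs) n hn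
  rw [map_sub, sub_eq_zero] at this
  exact this.symm

end PowerSeries

end CommRing

theorem mk_cnk_eq_genFun (ε q : ℤ) {k : ℕ} (hk : k ≠ 0) :
    (mk fun n ↦ cnk n k ε q) =
      Nat.Partition.genFun fun _ c ↦ coeff c (expand k hk (weightSeries ε q)) := by
  ext n
  rw [coeff_mk, Nat.Partition.coeff_genFun, cnk]
  refine sum_congr rfl fun ν _ ↦ ?_
  simp only [Finsupp.prod, Multiset.toFinsupp_support, Multiset.toFinsupp_apply,
    coeff_expand_weightSeries, prod_ite_zero]
  have hdvd : (∀ i, k ∣ ν.parts.count i) ↔ ∀ i ∈ ν.parts.toFinset, k ∣ ν.parts.count i := by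
    refine ⟨fun h i _ ↦ h i, fun h i ↦ ?_⟩
    by_cases hi : i ∈ ν.parts
    · exact h i (Multiset.mem_toFinset.mpr hi)
    · simp [Multiset.count_eq_zero.mpr hi]
  rw [if_congr hdvd rfl rfl]
  congr 1
  refine (prod_subset (fun i hi ↦ ?_) fun i _ hi ↦ ?_).symm
  · exact mem_range.mpr (Nat.lt_succ_of_le (ν.le_of_mem_parts (Multiset.mem_toFinset.mp hi)))
  · simp [Multiset.count_eq_zero.mpr (by simpa using hi)]

theorem cnk_generating_function_general (ε q : ℤ)
    (k : ℕ) (hk : 1 ≤ k) :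
    ∀ N : ℕ,
      PowerSeries.coeff (R := ℤ) N
        ((PowerSeries.mk fun n => cnk n k ε q) *
          ∏ r ∈ Finset.Icc 1 N, (1 - PowerSeries.C (R := ℤ) q * PowerSeries.X ^ (k * r))) =
      PowerSeries.coeff (R := ℤ) N
        (∏ r ∈ Finset.Icc 1 N, (1 - PowerSeries.C (R := ℤ) ε * PowerSeries.X ^ (k * r))) := by
  intro N
  have hk0 : k ≠ 0 := Nat.one_le_iff_ne_zero.mp hk
  set W := expand k hk0 (weightSeries ε q)
  have hW : constantCoeff W = 1 := by simp [W, weightSeries]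
  set F : ℕ → ℤ⟦X⟧ := fun r ↦ 1 + ∑' j, coeff (j + 1) W • X ^ (r * (j + 1))
  have hF : ∀ r (hr : r ≠ 0), F r = expand r hr W := fun r hr ↦ one_add_tsum_eq_expand hW hr
  have hprod : HasProd (fun i ↦ F (i + 1)) (mk fun n ↦ cnk n k ε q) := by
    rw [mk_cnk_eq_genFun ε q hk0]
    exact Nat.Partition.hasProd_genFun fun _ c ↦ coeff c W
  have htrunc := X_pow_dvd_sub_prod_range_of_hasProd hprod
    (fun i ↦ hF (i + 1) i.succ_ne_zero ▸ X_pow_dvd_expand_sub_one hW _ _) N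
  have hfin : (∏ i ∈ range N, F (i + 1)) * ∏ r ∈ Icc 1 N, (1 - C q * X ^ (k * r)) =
      ∏ r ∈ Icc 1 N, (1 - C ε * X ^ (k * r)) := by
    rw [range_eq_Ico, prod_Ico_add' F, zero_add, Ico_add_one_right_eq_Icc, ← prod_mul_distrib]
    refine prod_congr rfl fun r hr ↦ ?_
    have hr0 : r ≠ 0 := Nat.one_le_iff_ne_zero.mp (mem_Icc.mp hr).1
    rw [hF r hr0, ← expand_mul r hr0 k hk0, mul_comm k r]
    exact expand_weightSeries_mul_one_sub ε q _ _
  rw [← hfin, ← sub_eq_zero, ← map_sub, ← sub_mul]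
  exact X_pow_dvd_iff.mp (htrunc.mul_right _) N (Nat.lt_succ_self N)

/-- Generating function identity
`Σ_{n≥0} c_{n,k}(q) tⁿ = ∏_{r≥1} (1 - ε t^{kr})/(1 - q t^{kr})`, stated
coefficient-wise as a formal power series identity: for every `N`, the `N`-th
coefficient of `(Σₙ c_{n,k}(q) tⁿ)·∏_{r=1}^{N}(1 - q t^{kr})` agrees with that of
`∏_{r=1}^{N}(1 - ε t^{kr})` (factors with `kr > N` do not affect coefficient `N`). -/
theorem cnk_generating_function (ε q : ℤ) (hε : ε = 1 ∨ ε = -1)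
    (k : ℕ) (hk : 1 ≤ k) :
    ∀ N : ℕ,
      PowerSeries.coeff (R := ℤ) N
        ((PowerSeries.mk fun n => cnk n k ε q) *
          ∏ r ∈ Finset.Icc 1 N, (1 - PowerSeries.C (R := ℤ) q * PowerSeries.X ^ (k * r))) =
      PowerSeries.coeff (R := ℤ) N
        (∏ r ∈ Finset.Icc 1 N, (1 - PowerSeries.C (R := ℤ) ε * PowerSeries.X ^ (k * r))) :=
  cnk_generating_function_general ε q k hk
end

section
/- For ε = ±1, the generating function for the number c_n(q) of irreducible characters of GL_n(εq) satisfies Σ_{n≥0} c_n(q) tⁿ = ∏_{r=1}^{∞} (1 − ε tʳ)/(1 − q tʳ), where c_n(q) := Σ over partitions ν = (1^{n₁}2^{n₂}⋯) of n of ∏_{nᵢ>0}(q^{nᵢ} − ε q^{nᵢ−1}). -/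
open scoped BigOperators Classical

/-!
`c_n(q)` is the `n`-th coefficient of the partition generating function in which a part of
multiplicity `c` has weight `w(c) = q^c - ε q^{c-1}`, and `Nat.Partition.hasProd_genFun` writes
that series as `∏_{i ≥ 1} (1 + Σ_{c ≥ 1} w(c) t^{ic})`. Since `w(c) = (q - ε) q^{c-1}`, the
`i`-th factor is `1 + (q - ε) t^i / (1 - q t^i) = (1 - ε t^i) / (1 - q t^i)`. Modulo `t^{N+1}`
every factor with `i > N` is `1`, so the infinite product may be replaced by the product over
`i ≤ N`, which gives the identity in degree `N`.
-/

open Finset PowerSeries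
open scoped PowerSeries.WithPiTopology

namespace PowerSeries

variable {R : Type*} [CommRing R]

theorem coeff_eq_of_X_pow_dvd_sub {N n : ℕ} {g h : R⟦X⟧} (hgh : X ^ N ∣ g - h) (hn : n < N) :
    coeff n g = coeff n h :=
  sub_eq_zero.mp (by rw [← map_sub]; exact X_pow_dvd_iff.mp hgh n hn)

theorem X_pow_dvd_prod_sub_one {ι : Type*} {N : ℕ} (s : Finset ι) {F : ι → R⟦X⟧}
    (hF : ∀ i ∈ s, X ^ N ∣ F i - 1) : X ^ N ∣ ∏ i ∈ s, F i - 1 := by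
  induction s using Finset.cons_induction with
  | empty => simp
  | cons i s _ ih =>
    rw [prod_cons, show F i * ∏ j ∈ s, F j - 1 = F i * (∏ j ∈ s, F j - 1) + (F i - 1) by ring]
    exact dvd_add (dvd_mul_of_dvd_right (ih fun j hj => hF j (mem_cons_of_mem hj)) _)
      (hF i (mem_cons_self i s))

theorem X_pow_dvd_sub_prod_of_hasProd [TopologicalSpace R] [DiscreteTopology R] {ι : Type*}
    {F : ι → R⟦X⟧} {G : R⟦X⟧} (hG : HasProd F G) {N : ℕ} (t : Finset ι)
    (hF : ∀ i ∉ t, X ^ N ∣ F i - 1) : X ^ N ∣ G - ∏ i ∈ t, F i := by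
  refine X_pow_dvd_iff.mpr fun n hn => sub_eq_zero.mpr ?_
  have hconv := (WithPiTopology.continuous_coeff R n).tendsto G |>.comp hG
  obtain ⟨s, hs⟩ :=
    Filter.eventually_atTop.mp (hconv ((isOpen_discrete {coeff n G}).mem_nhds rfl))
  have htail : X ^ N ∣ ∏ i ∈ (s ∪ t) \ t, F i - 1 :=
    X_pow_dvd_prod_sub_one _ fun i hi => hF i (mem_sdiff.mp hi).2
  calc coeff n G = coeff n (∏ i ∈ s ∪ t, F i) := (hs _ subset_union_left).symm
    _ = coeff n ((∏ i ∈ t, F i) * ∏ i ∈ (s ∪ t) \ t, F i) := by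
      rw [mul_comm, prod_sdiff subset_union_right]
    _ = coeff n (∏ i ∈ t, F i) :=
      coeff_eq_of_X_pow_dvd_sub (by rw [← mul_sub_one]; exact dvd_mul_of_dvd_right htail _) hn

end PowerSeries

theorem Finset.prod_Icc_one_eq_prod_range_succ {M : Type*} [CommMonoid M] (f : ℕ → M) (N : ℕ) :
    ∏ r ∈ Icc 1 N, f r = ∏ i ∈ range N, f (i + 1) := by
  rw [range_eq_Ico, prod_Ico_add', zero_add, Ico_add_one_right_eq_Icc]

theorem Nat.Partition.toFinsupp_prod_eq_prod_range {M : Type*} [CommMonoid M] {n : ℕ}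
    (p : n.Partition) (f : ℕ → ℕ → M) :
    p.parts.toFinsupp.prod f =
      ∏ i ∈ range (n + 1), if 0 < p.parts.count i then f i (p.parts.count i) else 1 := by
  simp_rw [Multiset.count_pos, ← Multiset.mem_toFinset, prod_ite_mem, Finsupp.prod,
    Multiset.toFinsupp_support, Multiset.toFinsupp_apply]
  congr 1
  rw [eq_comm, inter_eq_right]
  exact fun i hi => mem_range_succ_iff.mpr (p.le_of_mem_parts (Multiset.mem_toFinset.mp hi))

section Factor

variable {R : Type*} [CommRing R]

def cnWeight (ε q : R) (c : ℕ) : R := q ^ c - ε * q ^ (c - 1)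

theorem cnWeight_succ (ε q : R) (j : ℕ) : cnWeight ε q (j + 1) = (q - ε) * q ^ j := by
  rw [cnWeight, Nat.add_sub_cancel]
  ring

variable [TopologicalSpace R]

noncomputable def cnFactor (ε q : R) (i : ℕ) : R⟦X⟧ :=
  1 + ∑' j, cnWeight ε q (j + 1) • X ^ (i * (j + 1))

variable [IsTopologicalRing R] [T2Space R]

theorem cnFactor_eq (ε q : R) {i : ℕ} (hi : i ≠ 0) :
    cnFactor ε q i = 1 + C (q - ε) * X ^ i * ∑' j, (C q * X ^ i) ^ j := by
  have hsum : Summable fun j => (C q * X ^ i : R⟦X⟧) ^ j :=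
    WithPiTopology.summable_pow_of_constantCoeff_eq_zero (by simp [hi])
  rw [cnFactor, ← hsum.tsum_mul_left]
  refine congrArg (1 + ·) (tsum_congr fun j => ?_)
  rw [cnWeight_succ, smul_eq_C_mul, mul_pow, ← pow_mul, map_mul, map_pow]
  ring

theorem cnFactor_mul_one_sub (ε q : R) {i : ℕ} (hi : i ≠ 0) :
    cnFactor ε q i * (1 - C q * X ^ i) = 1 - C ε * X ^ i := by
  have hgeom := WithPiTopology.tsum_pow_mul_one_sub_of_constantCoeff_eq_zero
    (f := C q * X ^ i) (by simp [hi])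
  rw [cnFactor_eq ε q hi, map_sub]
  linear_combination (C q - C ε) * X ^ i * hgeom

theorem X_pow_dvd_cnFactor_sub_one (ε q : R) {i : ℕ} (hi : i ≠ 0) :
    X ^ i ∣ cnFactor ε q i - 1 := by
  rw [cnFactor_eq ε q hi, add_sub_cancel_left]
  exact dvd_mul_of_dvd_left (dvd_mul_left _ _) _

end Factor

theorem cnk_one_eq_coeff_genFun (n : ℕ) (ε q : ℤ) :
    cnk n 1 ε q = coeff n (Nat.Partition.genFun fun _ => cnWeight ε q) := by
  simp only [cnk, one_dvd, implies_true, if_true, Nat.div_one, Nat.Partition.coeff_genFun,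
    Nat.Partition.toFinsupp_prod_eq_prod_range, cnWeight]

theorem cn_generating_function_general (ε q : ℤ) :
    ∀ N : ℕ,
      PowerSeries.coeff (R := ℤ) N
        ((PowerSeries.mk fun n => cnk n 1 ε q) *
          ∏ r ∈ Finset.Icc 1 N, (1 - PowerSeries.C (R := ℤ) q * PowerSeries.X ^ r)) =
      PowerSeries.coeff (R := ℤ) N
        (∏ r ∈ Finset.Icc 1 N, (1 - PowerSeries.C (R := ℤ) ε * PowerSeries.X ^ r)) := by
  intro N
  set G := Nat.Partition.genFun fun _ => cnWeight ε q
  have hG : mk (fun n => cnk n 1 ε q) = G := ext fun n => by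
    rw [coeff_mk, cnk_one_eq_coeff_genFun]
  have htrunc : X ^ (N + 1) ∣ G - ∏ i ∈ range N, cnFactor ε q (i + 1) :=
    X_pow_dvd_sub_prod_of_hasProd (Nat.Partition.hasProd_genFun fun _ => cnWeight ε q) _
      fun i hi => (pow_dvd_pow X (by simpa using hi)).trans
        (X_pow_dvd_cnFactor_sub_one ε q i.succ_ne_zero)
  have hmul := htrunc.mul_right (∏ i ∈ range N, (1 - C q * X ^ (i + 1)))
  rw [sub_mul] at hmul
  rw [hG, prod_Icc_one_eq_prod_range_succ, prod_Icc_one_eq_prod_range_succ,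
    coeff_eq_of_X_pow_dvd_sub hmul N.lt_succ_self, ← prod_mul_distrib]
  exact congrArg _ (prod_congr rfl fun i _ => cnFactor_mul_one_sub ε q i.succ_ne_zero)

/-- Generating function for `c_n(q) = c_{n,1}(q)`, the number of irreducible
characters of `GL_n(εq)`:
`Σ_{n≥0} c_n(q) tⁿ = ∏_{r≥1} (1 - ε tʳ)/(1 - q tʳ)`, stated coefficient-wise. -/
theorem cn_generating_function (ε q : ℤ) (hε : ε = 1 ∨ ε = -1) :
    ∀ N : ℕ,
      PowerSeries.coeff (R := ℤ) N
        ((PowerSeries.mk fun n => cnk n 1 ε q) *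
          ∏ r ∈ Finset.Icc 1 N, (1 - PowerSeries.C (R := ℤ) q * PowerSeries.X ^ r)) =
      PowerSeries.coeff (R := ℤ) N
        (∏ r ∈ Finset.Icc 1 N, (1 - PowerSeries.C (R := ℤ) ε * PowerSeries.X ^ r)) :=
  cn_generating_function_general ε q
end
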